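/- arXiv:1806.04737 — 2 statements merged into one kernel-verified Lean document; each statement's English description precedes it below -/
import Mathlib

section
/- Let B > 0 with B < 1 and let T' : (x₀, 1) → ℝ be given by T'(x) = (x − x₀)^{B−1} (1 + G(x)) where G is Hölder continuous with exponent αB on (x₀,1), G ≥ −1/2, and |G| ≤ 1/2. Then there exist ι ∈ (0, 1−B] and a constant C_h > 0 such that for all x, y ∈ (x₀,1): |T'(x) − T'(y)| ≤ C_h |T'(x)| |T'(y)| |x − y|^ι. -/
/-!
Since `|T' x - T' y| = |T' x| |T' y| |(T' x)⁻¹ - (T' y)⁻¹|`, it suffices that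
`1 / T' = (x - x₀) ^ (1 - B) * (1 + G)⁻¹` be Hölder. Both factors are bounded and Hölder on the
bounded interval (the first because `t ↦ t ^ (1 - B)` is `(1 - B)`-Hölder, the second because
inversion is Lipschitz on `[1/2, ∞)`), so their product is Hölder of exponent `min (α B) (1 - B)`.
-/

open scoped NNReal
open Set

lemma Real.rpow_sub_rpow_le_rpow_sub {p u v : ℝ} (hp₀ : 0 ≤ p) (hp₁ : p ≤ 1) (hu : 0 ≤ u)
    (huv : u ≤ v) : v ^ p - u ^ p ≤ (v - u) ^ p := by
  have := Real.rpow_add_le_add_rpow (sub_nonneg.2 huv) hu hp₀ hp₁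
  rw [sub_add_cancel] at this
  linarith

namespace HolderOnWith

variable {X Y : Type*} [PseudoMetricSpace X] [PseudoMetricSpace Y] {C r : ℝ≥0} {f : X → Y}
  {s : Set X}

lemma of_dist_le (h : ∀ x ∈ s, ∀ y ∈ s, dist (f x) (f y) ≤ C * dist x y ^ (r : ℝ)) :
    HolderOnWith C r f s := by
  intro x hx y hy
  rw [edist_dist, edist_dist, ENNReal.ofReal_rpow_of_nonneg dist_nonneg r.coe_nonneg,
    ← ENNReal.ofReal_coe_nnreal, ← ENNReal.ofReal_mul C.coe_nonneg]
  exact ENNReal.ofReal_le_ofReal (h x hx y hy)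

lemma congr {g : X → Y} (hf : HolderOnWith C r f s) (hfg : EqOn f g s) :
    HolderOnWith C r g s := by
  intro x hx y hy
  rw [← hfg hx, ← hfg hy]
  exact hf x hx y hy

lemma inv {𝕜 : Type*} [NormedDivisionRing 𝕜] {f : X → 𝕜} {c : ℝ≥0} (hf : HolderOnWith C r f s)
    (hc : 0 < c) (hfc : ∀ x ∈ s, c ≤ ‖f x‖) :
    HolderOnWith (C / c ^ 2) r (fun x ↦ (f x)⁻¹) s := by
  refine of_dist_le fun x hx y hy ↦ ?_
  have hx₀ : f x ≠ 0 := norm_pos_iff.1 ((NNReal.coe_pos.2 hc).trans_le (hfc x hx))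
  have hy₀ : f y ≠ 0 := norm_pos_iff.1 ((NNReal.coe_pos.2 hc).trans_le (hfc y hy))
  have hc2 : (c : ℝ) ^ 2 ≤ ‖f x‖ * ‖f y‖ := by
    rw [sq]; exact mul_le_mul (hfc x hx) (hfc y hy) c.coe_nonneg (norm_nonneg _)
  rw [dist_inv_inv₀ hx₀ hy₀, NNReal.coe_div, NNReal.coe_pow, div_mul_eq_mul_div]
  exact div_le_div₀ (by positivity) (hf.dist_le hx hy) (by positivity) hc2

lemma mul {R : Type*} [SeminormedRing R] {f g : X → R} {Cf Cg Mf Mg : ℝ≥0}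
    (hf : HolderOnWith Cf r f s) (hg : HolderOnWith Cg r g s) (hMf : ∀ x ∈ s, ‖f x‖ ≤ Mf)
    (hMg : ∀ x ∈ s, ‖g x‖ ≤ Mg) :
    HolderOnWith (Mf * Cg + Mg * Cf) r (fun x ↦ f x * g x) s := by
  refine of_dist_le fun x hx y hy ↦ ?_
  have hsplit : f x * g x - f y * g y = f x * (g x - g y) + (f x - f y) * g y := by noncomm_ring
  rw [dist_eq_norm, hsplit]
  calc ‖f x * (g x - g y) + (f x - f y) * g y‖
      ≤ ‖f x‖ * dist (g x) (g y) + dist (f x) (f y) * ‖g y‖ := by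
        rw [dist_eq_norm, dist_eq_norm]
        exact (norm_add_le _ _).trans (add_le_add (norm_mul_le _ _) (norm_mul_le _ _))
    _ ≤ Mf * (Cg * dist x y ^ (r : ℝ)) + Cf * dist x y ^ (r : ℝ) * Mg := by
        gcongr
        exacts [hMf x hx, hg.dist_le hx hy, hf.dist_le hx hy, hMg y hy]
    _ = ↑(Mf * Cg + Mg * Cf) * dist x y ^ (r : ℝ) := by push_cast; ring

lemma dist_le_mul_norm_mul_norm_of_inv {𝕜 : Type*} [NormedDivisionRing 𝕜] {f : X → 𝕜}
    (hf : HolderOnWith C r (fun x ↦ (f x)⁻¹) s) (hf₀ : ∀ x ∈ s, f x ≠ 0) {x y : X} (hx : x ∈ s)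
    (hy : y ∈ s) : dist (f x) (f y) ≤ C * ‖f x‖ * ‖f y‖ * dist x y ^ (r : ℝ) := by
  have hpos : 0 < ‖f x‖ * ‖f y‖ :=
    mul_pos (norm_pos_iff.2 (hf₀ x hx)) (norm_pos_iff.2 (hf₀ y hy))
  have h := hf.dist_le hx hy
  rw [dist_inv_inv₀ (hf₀ x hx) (hf₀ y hy), div_le_iff₀ hpos] at h
  linarith

end HolderOnWith

lemma holderOnWith_sub_rpow (a : ℝ) {p : ℝ≥0} (hp : p ≤ 1) :
    HolderOnWith 1 p (fun x : ℝ ↦ (x - a) ^ (p : ℝ)) (Ici a) := by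
  have key : ∀ x ∈ Ici a, ∀ y ∈ Ici a, x ≤ y →
      |(x - a) ^ (p : ℝ) - (y - a) ^ (p : ℝ)| ≤ |x - y| ^ (p : ℝ) := by
    intro x hx y _ hxy
    have hmono : (x - a) ^ (p : ℝ) ≤ (y - a) ^ (p : ℝ) :=
      Real.rpow_le_rpow (sub_nonneg.2 hx) (by linarith) p.coe_nonneg
    rw [abs_sub_comm, abs_of_nonneg (sub_nonneg.2 hmono), abs_sub_comm,
      abs_of_nonneg (sub_nonneg.2 hxy)]
    simpa using Real.rpow_sub_rpow_le_rpow_sub p.coe_nonneg hp (sub_nonneg.2 hx)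
      (sub_le_sub_right hxy a)
  refine HolderOnWith.of_dist_le fun x hx y hy ↦ ?_
  rw [Real.dist_eq, Real.dist_eq, NNReal.coe_one, one_mul]
  rcases le_total x y with hxy | hyx
  · exact key x hx y hy hxy
  · rw [abs_sub_comm, abs_sub_comm x]
    exact key y hy x hx hyx

lemma holderOnWith_inv_one_add {X : Type*} [PseudoMetricSpace X] {C r : ℝ≥0} {G : X → ℝ}
    {s : Set X} (hG : HolderOnWith C r G s) (hG₁ : ∀ x ∈ s, |G x| ≤ 1 / 2) :
    HolderOnWith (4 * C) r (fun x ↦ (1 + G x)⁻¹) s := by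
  have hG' : HolderOnWith C r (fun x ↦ 1 + G x) s :=
    .of_dist_le fun x hx y hy ↦ by simpa only [dist_add_left] using hG.dist_le hx hy
  have h := hG'.inv (c := 1 / 2) (by norm_num) fun x hx ↦ by
    have := abs_le.1 (hG₁ x hx)
    rw [Real.norm_of_nonneg (by linarith)]
    push_cast
    linarith
  convert h using 1
  rw [div_eq_mul_inv, mul_comm]
  norm_num

lemma exists_holderOnWith_inv_sub_rpow_mul_one_add {x₀ b : ℝ} {p a C : ℝ≥0} (hp : p ≤ 1)
    {G : ℝ → ℝ} (hG : HolderOnWith C a G (Ioo x₀ b)) (hG₁ : ∀ x ∈ Ioo x₀ b, |G x| ≤ 1 / 2) :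
    ∃ K, HolderOnWith K (min a p) (fun x ↦ ((x - x₀) ^ (-(p : ℝ)) * (1 + G x))⁻¹) (Ioo x₀ b) := by
  have hD : ∀ x ∈ Ioo x₀ b, ∀ y ∈ Ioo x₀ b, edist x y ≤ (b - x₀).toNNReal := fun x hx y hy ↦
    (Metric.edist_le_ediam_of_mem hx hy).trans (Real.ediam_Ioo x₀ b).le
  have hpow : HolderOnWith 1 p (fun x ↦ (x - x₀) ^ (p : ℝ)) (Ioo x₀ b) :=
    (holderOnWith_sub_rpow x₀ hp).mono (Ioo_subset_Ioi_self.trans Ioi_subset_Ici_self)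
  have hpow_le : ∀ x ∈ Ioo x₀ b, ‖(x - x₀) ^ (p : ℝ)‖ ≤ ((b - x₀) ^ (p : ℝ)).toNNReal := by
    intro x hx
    rw [Real.norm_of_nonneg (Real.rpow_nonneg (sub_nonneg.2 hx.1.le) _)]
    exact (Real.rpow_le_rpow (sub_nonneg.2 hx.1.le) (by linarith [hx.2]) p.coe_nonneg).trans
      (Real.le_coe_toNNReal _)
  have hinv_le : ∀ x ∈ Ioo x₀ b, ‖(1 + G x)⁻¹‖ ≤ (2 : ℝ≥0) := fun x hx ↦ by
    have := abs_le.1 (hG₁ x hx)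
    rw [norm_inv, Real.norm_of_nonneg (by linarith), NNReal.coe_ofNat]
    exact inv_le_of_inv_le₀ (by norm_num) (by linarith)
  have h := (hpow.of_le hD (min_le_right a p)).mul
    ((holderOnWith_inv_one_add hG hG₁).of_le hD (min_le_left a p)) hpow_le hinv_le
  refine ⟨_, h.congr fun x hx ↦ ?_⟩
  simp only [mul_inv, ← Real.rpow_neg (sub_nonneg.2 hx.1.le), neg_neg]

theorem stmt10_general (x₀ B α : ℝ) (hB : 0 < B) (hB1 : B < 1) (hα : 0 < α)
    (G T' : ℝ → ℝ) (CG : ℝ)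
    (hG : ∀ x ∈ Set.Ioo x₀ 1, ∀ y ∈ Set.Ioo x₀ 1,
      |G x - G y| ≤ CG * |x - y| ^ (α * B))
    (hGub : ∀ x ∈ Set.Ioo x₀ 1, |G x| ≤ 1 / 2)
    (hT' : ∀ x ∈ Set.Ioo x₀ 1, T' x = (x - x₀) ^ (B - 1) * (1 + G x)) :
    ∃ ι ∈ Set.Ioc (0 : ℝ) (1 - B), ∃ Ch : ℝ, 0 < Ch ∧
      ∀ x ∈ Set.Ioo x₀ 1, ∀ y ∈ Set.Ioo x₀ 1,
        |T' x - T' y| ≤ Ch * |T' x| * |T' y| * |x - y| ^ ι := by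
  obtain ⟨p, hp⟩ : ∃ p : ℝ≥0, (p : ℝ) = 1 - B := ⟨⟨1 - B, by linarith⟩, rfl⟩
  obtain ⟨a, ha⟩ : ∃ a : ℝ≥0, (a : ℝ) = α * B := ⟨⟨α * B, by positivity⟩, rfl⟩
  have hG' : HolderOnWith CG.toNNReal a G (Ioo x₀ 1) := .of_dist_le fun x hx y hy ↦ by
    rw [Real.dist_eq, Real.dist_eq, ha]
    exact (hG x hx y hy).trans (by gcongr; exact Real.le_coe_toNNReal _)
  obtain ⟨C, hC⟩ := exists_holderOnWith_inv_sub_rpow_mul_one_add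
    (by rw [← NNReal.coe_le_coe, hp, NNReal.coe_one]; linarith) hG' hGub
  have hT'eq : ∀ x ∈ Ioo x₀ 1, T' x = (x - x₀) ^ (-(p : ℝ)) * (1 + G x) := by
    simpa only [hp, neg_sub] using hT'
  have hT'0 : ∀ x ∈ Ioo x₀ 1, T' x ≠ 0 := fun x hx ↦ by
    rw [hT'eq x hx]
    exact mul_ne_zero (Real.rpow_pos_of_pos (sub_pos.2 hx.1) _).ne'
      (by linarith [(abs_le.1 (hGub x hx)).1])
  have hCT' : HolderOnWith C (min a p) (fun x ↦ (T' x)⁻¹) (Ioo x₀ 1) :=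
    hC.congr fun x hx ↦ by rw [hT'eq x hx]
  refine ⟨((min a p : ℝ≥0) : ℝ), ⟨?_, ?_⟩, C + 1, by positivity, fun x hx y hy ↦ ?_⟩
  · rw [NNReal.coe_min, ha, hp]; exact lt_min (by positivity) (by linarith)
  · rw [NNReal.coe_min, hp]; exact min_le_right _ _
  calc |T' x - T' y| ≤ C * |T' x| * |T' y| * |x - y| ^ ((min a p : ℝ≥0) : ℝ) := by
        simpa only [Real.dist_eq, Real.norm_eq_abs] using
          hCT'.dist_le_mul_norm_mul_norm_of_inv hT'0 hx hy
    _ ≤ (C + 1) * |T' x| * |T' y| * |x - y| ^ ((min a p : ℝ≥0) : ℝ) := by gcongr; linarith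

/-- Multiplicative Hölder inequality for the derivative of the Lorenz-like map near
its singular point: if `T'(x) = (x − x₀)^{B−1}(1 + G(x))` with `G` Hölder of exponent
`αB`, `G ≥ −1/2` and `|G| ≤ 1/2` on `(x₀, 1)`, then there are `ι ∈ (0, 1−B]` and
`C_h > 0` with `|T'(x) − T'(y)| ≤ C_h |T'(x)| |T'(y)| |x − y|^ι`. -/
theorem stmt10 (x₀ B α : ℝ) (hB : 0 < B) (hB1 : B < 1) (hx₀ : x₀ < 1) (hα : 0 < α)
    (G T' : ℝ → ℝ) (CG : ℝ)
    (hG : ∀ x ∈ Set.Ioo x₀ 1, ∀ y ∈ Set.Ioo x₀ 1,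
      |G x - G y| ≤ CG * |x - y| ^ (α * B))
    (hGlb : ∀ x ∈ Set.Ioo x₀ 1, -(1 / 2) ≤ G x)
    (hGub : ∀ x ∈ Set.Ioo x₀ 1, |G x| ≤ 1 / 2)
    (hT' : ∀ x ∈ Set.Ioo x₀ 1, T' x = (x - x₀) ^ (B - 1) * (1 + G x)) :
    ∃ ι ∈ Set.Ioc (0 : ℝ) (1 - B), ∃ Ch : ℝ, 0 < Ch ∧
      ∀ x ∈ Set.Ioo x₀ 1, ∀ y ∈ Set.Ioo x₀ 1,
        |T' x - T' y| ≤ Ch * |T' x| * |T' y| * |x - y| ^ ι :=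
  stmt10_general x₀ B α hB hB1 hα G T' CG hG hGub hT'
end

section
/- Let μ^ε and μ₀ be probability measures on a measurable space Z, t, t₀ : Z → [c, ∞) with c > 0, t ∈ L¹(μ^ε), t₀ ∈ L¹(μ₀). Suppose that for every ϵ > 0 there is M such that μ^ε[(t − t∧M)1_{t>M}] ≤ ϵ and μ₀[(t₀ − t₀∧M)1_{t₀>M}] ≤ ϵ. Then for every bounded measurable F : Z × [0,∞) → ℝ, writing E(F) := ∫ ∫₀^{t(x)} F(x,s) ds dμ^ε and E_M(F) := ∫ ∫₀^{t(x)∧M} F(x,s) ds dμ^ε, one has | E(F)/μ^ε(t) − E_M(F)/μ^ε(t∧M) | ≤ 2ϵ ‖F‖_∞ / (μ^ε(t) ∧ 1). -/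
/-!
Write `A = μ(t)`, `B = μ(t ∧ M)`, `E = E(F)` and `E_M = E_M(F)`. Slicing the fibre integrals at
height `t ∧ M` gives `|E − E_M| ≤ ‖F‖_∞ (A − B)` and `|E_M| ≤ ‖F‖_∞ |B|`, so splitting
`E/A − E_M/B = (E − E_M)/A + (E_M/A − E_M/B)` bounds each term by `‖F‖_∞ (A − B)/A`.
The tail hypothesis says `A − B ≤ ϵ`, and `A ≥ A ∧ 1 > 0` because `t ≥ c > 0`.
-/

open MeasureTheory Set

theorem abs_div_sub_div_le_of_abs_le {A B E K : ℝ} (hK : 0 ≤ K) (hA : 0 < A) (hBA : B ≤ A)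
    (hE : |E| ≤ K * |B|) : |E / A - E / B| ≤ K * (A - B) / A := by
  rcases eq_or_ne B 0 with rfl | hB
  · have hE0 : E = 0 := abs_nonpos_iff.mp (by simpa using hE)
    simp only [hE0, zero_div, sub_zero, abs_zero]
    positivity
  calc |E / A - E / B| = |E| * (A - B) / (A * |B|) := by
        rw [div_sub_div _ _ hA.ne' hB, show E * B - A * E = E * (B - A) by ring, abs_div,
          abs_mul, abs_mul, abs_of_pos hA, abs_of_nonpos (sub_nonpos.2 hBA), neg_sub]
    _ ≤ K * |B| * (A - B) / (A * |B|) := by gcongr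
    _ = K * (A - B) / A := by field_simp

theorem abs_div_sub_div_le {A B E E' K : ℝ} (hK : 0 ≤ K) (hA : 0 < A) (hBA : B ≤ A)
    (hEE' : |E - E'| ≤ K * (A - B)) (hE' : |E'| ≤ K * |B|) :
    |E / A - E' / B| ≤ 2 * K * (A - B) / A :=
  calc |E / A - E' / B| = |(E - E') / A + (E' / A - E' / B)| := by congr 1; ring
    _ ≤ |(E - E') / A| + |E' / A - E' / B| := abs_add_le _ _
    _ ≤ K * (A - B) / A + K * (A - B) / A := by
        rw [abs_div, abs_of_pos hA]
        gcongr
        exact abs_div_sub_div_le_of_abs_le hK hA hBA hE'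
    _ = 2 * K * (A - B) / A := by ring

theorem abs_intervalIntegral_sub_le {f : ℝ → ℝ} {K : ℝ} (hf : Measurable f)
    (hfK : ∀ s, |f s| ≤ K) (a b c : ℝ) :
    |(∫ s in a..b, f s) - ∫ s in a..c, f s| ≤ K * |b - c| := by
  have hint : ∀ u v : ℝ, IntervalIntegrable f volume u v := fun u v =>
    intervalIntegrable_const.mono_fun' hf.aestronglyMeasurable (ae_of_all _ hfK)
  rw [intervalIntegral.integral_interval_sub_left (hint a b) (hint a c), ← Real.norm_eq_abs]
  exact intervalIntegral.norm_integral_le_of_norm_le_const fun s _ => hfK s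

section Suspension

variable {Z : Type*} [MeasurableSpace Z] {F : Z × ℝ → ℝ}

theorem stronglyMeasurable_intervalIntegral_snd (hF : Measurable F) (a : ℝ) :
    StronglyMeasurable fun p : Z × ℝ => ∫ s in a..p.2, F (p.1, s) := by
  have hslab : ∀ u v : Z × ℝ → ℝ, Measurable u → Measurable v →
      StronglyMeasurable fun p : Z × ℝ => ∫ s in Ioc (u p) (v p), F (p.1, s) := by
    intro u v hu hv
    have hset : MeasurableSet {q : (Z × ℝ) × ℝ | q.2 ∈ Ioc (u q.1) (v q.1)} :=
      (measurableSet_lt (hu.comp measurable_fst) measurable_snd).inter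
        (measurableSet_le measurable_snd (hv.comp measurable_fst))
    have := ((hF.comp (measurable_fst.fst.prodMk measurable_snd)).indicator
      hset).stronglyMeasurable.integral_prod_right' (ν := volume)
    simp_rw [← integral_indicator measurableSet_Ioc]
    convert this using 3 with p s
    simp only [indicator_apply, mem_ofPred_eq, Function.comp_apply]
  simp only [intervalIntegral]
  exact (hslab _ _ measurable_const measurable_snd).sub (hslab _ _ measurable_snd measurable_const)

variable {μ : Measure Z} {r r' : Z → ℝ} {K : ℝ}

/-- `E(F)` for the roof function `r`; `E_M(F)` is the case of the roof `r ∧ M`. -/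
noncomputable def suspensionIntegral (μ : Measure Z) (r : Z → ℝ) (F : Z × ℝ → ℝ) : ℝ :=
  ∫ x, (∫ s in (0 : ℝ)..r x, F (x, s)) ∂μ

theorem abs_intervalIntegral_zero_le (hF : Measurable F) (hFK : ∀ p, |F p| ≤ K) (x : Z) (b : ℝ) :
    |∫ s in (0 : ℝ)..b, F (x, s)| ≤ K * |b| := by
  simpa using
    abs_intervalIntegral_sub_le (hF.comp measurable_prodMk_left) (fun s => hFK (x, s)) 0 b 0

theorem integrable_intervalIntegral_of_abs_le (hF : Measurable F) (hFK : ∀ p, |F p| ≤ K)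
    (hr : Integrable r μ) : Integrable (fun x => ∫ s in (0 : ℝ)..r x, F (x, s)) μ := by
  refine (hr.abs.const_mul K).mono' ?_ (ae_of_all _ fun x => ?_)
  · exact (stronglyMeasurable_intervalIntegral_snd hF 0).aestronglyMeasurable.comp_aemeasurable
      (aemeasurable_id.prodMk hr.aemeasurable)
  · exact abs_intervalIntegral_zero_le hF hFK x (r x)

theorem abs_suspensionIntegral_le (hF : Measurable F) (hFK : ∀ p, |F p| ≤ K)
    (hr : Integrable r μ) : |suspensionIntegral μ r F| ≤ K * ∫ x, |r x| ∂μ := by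
  rw [suspensionIntegral, ← integral_const_mul K, ← Real.norm_eq_abs]
  refine norm_integral_le_of_norm_le (hr.abs.const_mul K) (ae_of_all _ fun x => ?_)
  exact abs_intervalIntegral_zero_le hF hFK x (r x)

theorem abs_suspensionIntegral_sub_le (hF : Measurable F) (hFK : ∀ p, |F p| ≤ K)
    (hr : Integrable r μ) (hr' : Integrable r' μ) (hr'r : ∀ x, r' x ≤ r x) :
    |suspensionIntegral μ r F - suspensionIntegral μ r' F| ≤
      K * ((∫ x, r x ∂μ) - ∫ x, r' x ∂μ) := by
  rw [suspensionIntegral, suspensionIntegral,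
    ← integral_sub (integrable_intervalIntegral_of_abs_le hF hFK hr)
      (integrable_intervalIntegral_of_abs_le hF hFK hr'),
    ← integral_sub hr hr', ← integral_const_mul K, ← Real.norm_eq_abs]
  refine norm_integral_le_of_norm_le ((hr.sub hr').const_mul K) (ae_of_all _ fun x => ?_)
  have hslice := abs_intervalIntegral_sub_le (hF.comp measurable_prodMk_left)
    (fun s => hFK (x, s)) 0 (r x) (r' x)
  rwa [abs_of_nonneg (sub_nonneg.2 (hr'r x))] at hslice

theorem integral_abs_min_eq_abs_integral [IsProbabilityMeasure μ] (hr : ∀ x, 0 ≤ r x) (M : ℝ) :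
    ∫ x, |min (r x) M| ∂μ = |∫ x, min (r x) M ∂μ| := by
  rcases le_or_gt M 0 with hM | hM
  · have hmin : ∀ x, min (r x) M = M := fun x => min_eq_right (hM.trans (hr x))
    simp [hmin]
  · have hmin : ∀ x, 0 ≤ min (r x) M := fun x => le_min (hr x) hM.le
    rw [abs_of_nonneg (integral_nonneg hmin)]
    exact integral_congr_ae (ae_of_all _ fun x => abs_of_nonneg (hmin x))

end Suspension

theorem stmt14_general {Z : Type*} [MeasurableSpace Z]
    (μe : Measure Z) [IsProbabilityMeasure μe]
    (t : Z → ℝ) (c : ℝ) (hc : 0 < c)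
    (hct : ∀ x, c ≤ t x)
    (ht : Integrable t μe)
    (ϵ : ℝ) (M : ℝ)
    (htail : ∫ x, (t x - min (t x) M) ∂μe ≤ ϵ) :
    ∀ (F : Z × ℝ → ℝ) (Fb : ℝ), Measurable F → (∀ p, |F p| ≤ Fb) →
      |(∫ x, (∫ s in (0 : ℝ)..(t x), F (x, s)) ∂μe) / (∫ x, t x ∂μe)
        - (∫ x, (∫ s in (0 : ℝ)..(min (t x) M), F (x, s)) ∂μe)
            / (∫ x, min (t x) M ∂μe)|
      ≤ 2 * ϵ * Fb / min (∫ x, t x ∂μe) 1 := by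
  intro F Fb hF hFb
  obtain ⟨x₀⟩ := μe.nonempty_of_neZero
  have hFb0 : 0 ≤ Fb := (abs_nonneg _).trans (hFb (x₀, 0))
  have ht0 : ∀ x, 0 ≤ t x := fun x => hc.le.trans (hct x)
  have htM : Integrable (fun x => min (t x) M) μe := ht.inf (integrable_const M)
  have hA : 0 < ∫ x, t x ∂μe :=
    hc.trans_le (by simpa using integral_mono (integrable_const c) ht hct)
  have hBA : ∫ x, min (t x) M ∂μe ≤ ∫ x, t x ∂μe := integral_mono htM ht fun x => min_le_left _ _
  have hAB : (∫ x, t x ∂μe) - ∫ x, min (t x) M ∂μe ≤ ϵ := by rwa [← integral_sub ht htM]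
  have hEM := abs_suspensionIntegral_le hF hFb htM
  rw [integral_abs_min_eq_abs_integral ht0] at hEM
  calc _ ≤ 2 * Fb * ((∫ x, t x ∂μe) - ∫ x, min (t x) M ∂μe) / ∫ x, t x ∂μe :=
        abs_div_sub_div_le hFb0 hA hBA
          (abs_suspensionIntegral_sub_le hF hFb ht htM fun x => min_le_left _ _) hEM
    _ ≤ 2 * Fb * ϵ / min (∫ x, t x ∂μe) 1 := by
        have hϵ : 0 ≤ ϵ := (sub_nonneg.2 hBA).trans hAB
        gcongr
        exact min_le_left _ _
    _ = 2 * ϵ * Fb / min (∫ x, t x ∂μe) 1 := by ring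

/-- Truncation estimate for normalized suspension functionals: if the tails of the
roof functions beyond level `M` have mass at most `ϵ`, then for every bounded
measurable `F`, `|E(F)/μ^ε(t) − E_M(F)/μ^ε(t∧M)| ≤ 2ϵ‖F‖_∞/(μ^ε(t) ∧ 1)`. -/
theorem stmt14 {Z : Type*} [MeasurableSpace Z]
    (μe μ0 : Measure Z) [IsProbabilityMeasure μe] [IsProbabilityMeasure μ0]
    (t t0 : Z → ℝ) (c : ℝ) (hc : 0 < c)
    (hct : ∀ x, c ≤ t x) (hct0 : ∀ x, c ≤ t0 x)
    (ht : Integrable t μe) (ht0 : Integrable t0 μ0)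
    (ϵ : ℝ) (hϵ : 0 < ϵ) (M : ℝ)
    (htail : ∫ x, (t x - min (t x) M) ∂μe ≤ ϵ)
    (htail0 : ∫ x, (t0 x - min (t0 x) M) ∂μ0 ≤ ϵ) :
    ∀ (F : Z × ℝ → ℝ) (Fb : ℝ), Measurable F → (∀ p, |F p| ≤ Fb) →
      |(∫ x, (∫ s in (0 : ℝ)..(t x), F (x, s)) ∂μe) / (∫ x, t x ∂μe)
        - (∫ x, (∫ s in (0 : ℝ)..(min (t x) M), F (x, s)) ∂μe)
            / (∫ x, min (t x) M ∂μe)|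
      ≤ 2 * ϵ * Fb / min (∫ x, t x ∂μe) 1 :=
  stmt14_general μe t c hc hct ht ϵ M htail
end
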